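/- arXiv:0811.4706 — 2 statements merged into one kernel-verified Lean document; each statement's English description precedes it below -/
import Mathlib

section
/- The Gaussian entropy measure H_G satisfies D1 (Robin Hood): for every vector c = (c₁,…,c_N) of positive reals, all indices i ≠ j with cᵢ > cⱼ, and every α with 0 < α < (cᵢ − cⱼ)/2, −Σ_{k≠i,j} log(cₖ²) − log((cᵢ − α)²) − log((cⱼ + α)²) < −Σ_k log(cₖ²). Equivalently, (cᵢ − α)(cⱼ + α) > cᵢ cⱼ. -/
open Finset

/-!
Moving `α` from `cᵢ` to `cⱼ` changes the product `cᵢ cⱼ` by `α (cᵢ - cⱼ - α) > 0`, while the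
other coordinates are untouched. Since `H_G` is minus the logarithm of the square of the product
of all coordinates, it strictly decreases.
-/

theorem mul_lt_sub_mul_add {R : Type*} [CommRing R] [LinearOrder R] [IsStrictOrderedRing R]
    {a b t : R} (ht : 0 < t) (h : t < a - b) : a * b < (a - t) * (b + t) := by
  linear_combination mul_pos ht (sub_pos.2 h)

theorem Real.log_sq_add_log_sq_lt {a b a' b' : ℝ} (hab : 0 < a * b) (h : a * b < a' * b') :
    Real.log (a ^ 2) + Real.log (b ^ 2) < Real.log (a' ^ 2) + Real.log (b' ^ 2) := by
  have hab' : 0 < a' * b' := hab.trans h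
  obtain ⟨ha, hb⟩ := mul_ne_zero_iff.1 hab.ne'
  obtain ⟨ha', hb'⟩ := mul_ne_zero_iff.1 hab'.ne'
  rw [← Real.log_mul (pow_ne_zero 2 ha) (pow_ne_zero 2 hb),
    ← Real.log_mul (pow_ne_zero 2 ha') (pow_ne_zero 2 hb'), ← mul_pow, ← mul_pow]
  exact Real.log_lt_log (by positivity) (pow_lt_pow_left₀ h hab.le two_ne_zero)

theorem Finset.sum_compl_pair_add {ι M : Type*} [Fintype ι] [DecidableEq ι] [AddCommMonoid M]
    (f : ι → M) {i j : ι} (hij : i ≠ j) :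
    ∑ k ∈ ({i, j}ᶜ : Finset ι), f k + (f i + f j) = ∑ k, f k := by
  rw [← sum_pair hij, sum_compl_add_sum]

theorem hg_robinHood_general (N : ℕ) (c : Fin N → ℝ) (hc : ∀ k, 0 < c k)
    (i j : Fin N) (hij : i ≠ j)
    (α : ℝ) (hα0 : 0 < α) (hα : α < (c i - c j) / 2) :
    (-∑ k ∈ ({i, j}ᶜ : Finset (Fin N)), Real.log (c k ^ 2)
        - Real.log ((c i - α) ^ 2) - Real.log ((c j + α) ^ 2)
      < -∑ k, Real.log (c k ^ 2)) ∧
    c i * c j < (c i - α) * (c j + α) := by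
  have hprod : c i * c j < (c i - α) * (c j + α) := mul_lt_sub_mul_add hα0 (by linarith)
  have hlog := Real.log_sq_add_log_sq_lt (mul_pos (hc i) (hc j)) hprod
  have hsplit := sum_compl_pair_add (fun k ↦ Real.log (c k ^ 2)) hij
  exact ⟨by linarith, hprod⟩

/-- The Gaussian entropy measure H_G(c) = −Σ log(cₖ²) satisfies D1 (Robin Hood):
a Robin Hood operation strictly decreases it; equivalently (cᵢ−α)(cⱼ+α) > cᵢcⱼ. -/
theorem hg_robinHood (N : ℕ) (c : Fin N → ℝ) (hc : ∀ k, 0 < c k)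
    (i j : Fin N) (hij : i ≠ j) (hgt : c j < c i)
    (α : ℝ) (hα0 : 0 < α) (hα : α < (c i - c j) / 2) :
    (-∑ k ∈ ({i, j}ᶜ : Finset (Fin N)), Real.log (c k ^ 2)
        - Real.log ((c i - α) ^ 2) - Real.log ((c j + α) ^ 2)
      < -∑ k, Real.log (c k ^ 2)) ∧
    c i * c j < (c i - α) * (c j + α) :=
  hg_robinHood_general N c hc i j hij α hα0 hα
end

section
/- The Gini Index satisfies P2 (Babies): for every vector c = (c₁,…,c_N) of nonnegative reals with Σ_k cₖ > 0, G(c‖0) > G(c), where c‖0 denotes the vector of length N + 1 obtained by appending a zero entry to c. -/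
open Finset


/-- The Gini Index of a list of nonnegative reals: sort the entries ascendingly as
c₍₁₎ ≤ ⋯ ≤ c₍N₎ and set G(c) = 1 − 2 Σ_{k=1}^N (c₍ₖ₎/‖c‖₁)·((N − k + 1/2)/N).
Below the sum runs over 0-indexed k, so the weight is ((N − k − 1/2)/N). -/
noncomputable def gini (l : List ℝ) : ℝ :=
  1 - 2 * ∑ k ∈ Finset.range l.length,
      ((Multiset.sort (l : Multiset ℝ) (· ≤ ·)).getD k 0 / l.sum) *
        (((l.length : ℝ) - k - 1 / 2) / l.length)

/-!
Write `W(l) = Σₖ lₖ (N − k − 1/2)` for the unnormalised weighted sum of a list of length `N`, so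
that `G(c) = 1 − 2 W(sort c) / (‖c‖₁ N)`. Since the weight of an entry only depends on how many
entries follow it, `W(a :: l) = a (|l| + 1/2) + W(l)`; in particular a leading zero does not
change `W`. Appending `0` to a nonnegative `c` puts it first in the sorted order, so it leaves
`W` and `‖c‖₁` unchanged and only raises the normaliser from `N` to `N + 1`. As `W(l) ≥ ‖l‖₁ / 2`
is positive, the Gini Index strictly increases.
-/

theorem Multiset.sort_append_singleton_of_forall_le {α : Type*} [LinearOrder α] {l : List α}
    {a : α} (h : ∀ x ∈ l, a ≤ x) :
    Multiset.sort (↑(l ++ [a]) : Multiset α) (· ≤ ·) = a :: Multiset.sort (↑l) (· ≤ ·) := by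
  rw [← Multiset.sort_cons _ _ _ fun x hx => h x (Multiset.mem_coe.mp hx)]
  congr 1
  simp

noncomputable def giniWeightedSum (l : List ℝ) : ℝ :=
  ∑ k ∈ range l.length, l.getD k 0 * ((l.length : ℝ) - k - 1 / 2)

theorem giniWeightedSum_cons (a : ℝ) (l : List ℝ) :
    giniWeightedSum (a :: l) = a * (l.length + 1 / 2) + giniWeightedSum l := by
  rw [giniWeightedSum, List.length_cons, sum_range_succ', add_comm, giniWeightedSum]
  congr 1
  · simp only [List.getD_cons_zero, Nat.cast_zero, Nat.cast_add, Nat.cast_one]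
    ring
  · refine sum_congr rfl fun k _ => ?_
    simp only [List.getD_cons_succ]
    push_cast
    ring

theorem sum_le_two_mul_giniWeightedSum {l : List ℝ} (hl : ∀ x ∈ l, 0 ≤ x) :
    l.sum ≤ 2 * giniWeightedSum l := by
  induction l with
  | nil => simp [giniWeightedSum]
  | cons a l ih =>
    have ha : 0 ≤ a := hl a List.mem_cons_self
    have ih := ih fun x hx => hl x (List.mem_cons_of_mem a hx)
    have hlen : (0 : ℝ) ≤ l.length := l.length.cast_nonneg
    rw [List.sum_cons, giniWeightedSum_cons]
    nlinarith

theorem gini_eq (l : List ℝ) :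
    gini l = 1 - 2 * giniWeightedSum (Multiset.sort (↑l : Multiset ℝ) (· ≤ ·)) /
      (l.sum * l.length) := by
  rw [gini, giniWeightedSum, mul_div_assoc, sum_div]
  simp only [Multiset.length_sort, Multiset.coe_card, div_mul_div_comm]

/-- The Gini Index satisfies P2 (Babies): appending a zero entry strictly increases the
Gini Index. -/
theorem gini_babies (c : List ℝ) (hc : ∀ x ∈ c, 0 ≤ x) (hsum : 0 < c.sum) :
    gini (c ++ [0]) > gini c := by
  set s := Multiset.sort (↑c : Multiset ℝ) (· ≤ ·)
  have hperm : s.Perm c := Multiset.coe_eq_coe.mp (Multiset.sort_eq _ _)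
  have hW : 0 < giniWeightedSum s := by
    have := sum_le_two_mul_giniWeightedSum fun x hx => hc x (hperm.mem_iff.mp hx)
    linarith [hperm.sum_eq]
  have hN : (0 : ℝ) < c.length := by
    exact_mod_cast List.length_pos_of_ne_nil (by rintro rfl; simp at hsum)
  rw [gini_eq, gini_eq, Multiset.sort_append_singleton_of_forall_le hc, giniWeightedSum_cons,
    zero_mul, zero_add, List.sum_append, List.length_append]
  simp only [List.sum_singleton, add_zero, List.length_singleton, Nat.cast_add, Nat.cast_one]
  gcongr
  linarith
end
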